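/- arXiv:0910.3312 — 5 statements merged into one kernel-verified Lean document; each statement's English description precedes it below -/
import Mathlib

section
/- Let K be a locally compact non-Archimedean field of prime characteristic and λ ∈ K with |λ| = 1. Then the multiplication map x ↦ λx is not topologically transitive on any sphere {x : |x| = r} with r > 0 in K. -/
set_option linter.unusedSectionVars false

open IsUltrametricDist

section Helpers
variable {K : Type*} [NontriviallyNormedField K] [IsUltrametricDist K]

/-- If two elements have different norms, the norm of their difference is at least
the norm of either. -/
lemma aux_norm_sub_ge (a b : K) (h : ‖a‖ ≠ ‖b‖) : ‖b‖ ≤ ‖a - b‖ := by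
  have := norm_add_eq_max_of_norm_ne_norm (x := a) (y := -b) (by simpa using h)
  rw [← sub_eq_add_neg] at this
  rw [this]
  simp [le_max_iff]

lemma aux_norm_sub_le_max {K : Type*} [SeminormedAddCommGroup K] [IsUltrametricDist K]
    (a b : K) : ‖a - b‖ ≤ max ‖a‖ ‖b‖ := by
  rw [sub_eq_add_neg]
  simpa using norm_add_le_max a (-b)

lemma aux_f_add (lam : K) (hl : ‖lam‖ = 1) (a b : ℕ) :
    ‖lam ^ (a + b) - 1‖ ≤ max ‖lam ^ a - 1‖ ‖lam ^ b - 1‖ := by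
  have key : lam ^ (a + b) - 1 = lam ^ a * (lam ^ b - 1) + (lam ^ a - 1) := by ring
  rw [key]
  refine (norm_add_le_max _ _).trans (max_le ?_ (le_max_left _ _))
  rw [norm_mul, norm_pow, hl, one_pow, one_mul]
  exact le_max_right _ _

lemma aux_pow_sub_one_le (b : K) (hb : ‖b‖ ≤ 1) (w : ℕ) : ‖(1 + b) ^ w - 1‖ ≤ ‖b‖ := by
  induction w with
  | zero => simp [norm_nonneg]
  | succ w ih =>
    have key : (1 + b) ^ (w + 1) - 1 = ((1 + b) ^ w - 1) * (1 + b) + b := by ring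
    rw [key]
    refine (norm_add_le_max _ _).trans (max_le ?_ le_rfl)
    calc ‖((1 + b) ^ w - 1) * (1 + b)‖ = ‖(1 + b) ^ w - 1‖ * ‖1 + b‖ := norm_mul _ _
    _ ≤ ‖b‖ * 1 := by
        refine mul_le_mul ih ?_ (norm_nonneg _) (norm_nonneg _)
        exact (norm_add_le_max _ _).trans (by simp [hb])
    _ = ‖b‖ := mul_one _

lemma aux_pow_sub_one_sub (b : K) (hb : ‖b‖ ≤ 1) (w : ℕ) :
    ‖(1 + b) ^ w - 1 - w * b‖ ≤ ‖b‖ ^ 2 := by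
  induction w with
  | zero => simp [sq_nonneg]
  | succ w ih =>
    have key : (1 + b) ^ (w + 1) - 1 - (↑(w + 1) : K) * b
        = ((1 + b) ^ w - 1 - w * b) + b * ((1 + b) ^ w - 1) := by
      push_cast; ring
    rw [key]
    refine (norm_add_le_max _ _).trans (max_le ih ?_)
    rw [norm_mul, sq]
    exact mul_le_mul_of_nonneg_left (aux_pow_sub_one_le b hb w) (norm_nonneg _)

end Helpers

section CharHelpers
variable {K : Type*} [NontriviallyNormedField K] [IsUltrametricDist K]

lemma aux_norm_natCast (p : ℕ) (hp : p.Prime) [CharP K p] (w : ℕ) (hw : ¬ p ∣ w) :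
    ‖(w : K)‖ = 1 := by
  haveI : Fact p.Prime := ⟨hp⟩
  have h1 : ((w : ZMod p)) ≠ 0 := by
    simpa [ZMod.natCast_eq_zero_iff] using hw
  have h2 : ((w : ZMod p)) ^ (p - 1) = 1 := ZMod.pow_card_sub_one_eq_one h1
  have h3 : (w : K) ^ (p - 1) = 1 := by
    have := congrArg (ZMod.castHom (dvd_refl p) K) h2
    simpa using this
  have h4 : ‖(w : K)‖ ^ (p - 1) = 1 := by
    rw [← norm_pow, h3, norm_one]
  have hp1 : p - 1 ≠ 0 := by
    have := hp.two_le; omega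
  exact (pow_eq_one_iff_of_nonneg (norm_nonneg _) hp1).mp h4

/-- If `‖b‖ < 1`, `b ≠ 0`, and `p ∤ w`, then `‖(1+b)^w - 1‖ = ‖b‖`. -/
lemma aux_pow_sub_one_eq (p : ℕ) (hp : p.Prime) [CharP K p] (b : K) (hb1 : ‖b‖ < 1)
    (hb0 : 0 < ‖b‖) (w : ℕ) (hw : ¬ p ∣ w) : ‖(1 + b) ^ w - 1‖ = ‖b‖ := by
  have hwb : ‖(w : K) * b‖ = ‖b‖ := by
    rw [norm_mul, aux_norm_natCast p hp w hw, one_mul]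
  have hsmall : ‖(1 + b) ^ w - 1 - (w : K) * b‖ ≤ ‖b‖ ^ 2 :=
    aux_pow_sub_one_sub b hb1.le w
  have hne : ‖(1 + b) ^ w - 1 - (w : K) * b‖ ≠ ‖(w : K) * b‖ := by
    rw [hwb]
    refine ne_of_lt (lt_of_le_of_lt hsmall ?_)
    nlinarith
  have := norm_add_eq_max_of_norm_ne_norm hne
  rw [sub_add_cancel] at this
  rw [this, hwb, max_eq_right]
  exact (hsmall.trans (by nlinarith)).trans le_rfl

end CharHelpers

section Key
variable {K : Type*} [NontriviallyNormedField K] [IsUltrametricDist K]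

/-- Key lemma: there is `u` with `0 < ‖u‖ < 1` whose distance (in norm) to every
`lam ^ n - 1` is at least `‖u‖`. -/
lemma aux_key (p : ℕ) (hp : p.Prime) [CharP K p] (lam : K) (hl : ‖lam‖ = 1) :
    ∃ u : K, 0 < ‖u‖ ∧ ‖u‖ < 1 ∧ ∀ n : ℕ, ‖u‖ ≤ ‖lam ^ n - 1 - u‖ := by
  classical
  haveI : Fact p.Prime := ⟨hp⟩
  by_cases hex : ∃ m : ℕ, 0 < m ∧ 0 < ‖lam ^ m - 1‖ ∧ ‖lam ^ m - 1‖ < 1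
  · -- interesting case
    have hS : ∃ m : ℕ, 0 < m ∧ ‖lam ^ m - 1‖ < 1 := by
      obtain ⟨m, h1, _, h3⟩ := hex
      exact ⟨m, h1, h3⟩
    set d := Nat.find hS with hd
    obtain ⟨hd0, hdlt⟩ : 0 < d ∧ ‖lam ^ d - 1‖ < 1 := Nat.find_spec hS
    -- every n with small f is a multiple of d
    have hdvd : ∀ n : ℕ, 0 < n → ‖lam ^ n - 1‖ < 1 → d ∣ n := by
      intro n
      induction n using Nat.strong_induction_on with
      | _ n ih =>
        intro hn hfn
        have hdn : d ≤ n := Nat.find_min' hS ⟨hn, hfn⟩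
        rcases eq_or_lt_of_le hdn with heq | hlt
        · exact heq ▸ dvd_refl d
        · have hmul : lam ^ d * (lam ^ (n - d) - 1) = (lam ^ n - 1) - (lam ^ d - 1) := by
            rw [mul_sub, mul_one, ← pow_add, Nat.add_sub_cancel' hdn]
            ring
          have hnorm : ‖lam ^ (n - d) - 1‖ = ‖(lam ^ n - 1) - (lam ^ d - 1)‖ := by
            rw [← hmul, norm_mul, norm_pow, hl, one_pow, one_mul]
          have hsub : ‖lam ^ (n - d) - 1‖ < 1 := by
            rw [hnorm]
            exact lt_of_le_of_lt (aux_norm_sub_le_max _ _) (max_lt hfn hdlt)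
          have hpos : 0 < n - d := Nat.sub_pos_of_lt hlt
          have := ih (n - d) (by omega) hpos hsub
          have : d ∣ (n - d) + d := Dvd.dvd.add this (dvd_refl d)
          rwa [Nat.sub_add_cancel hdn] at this
    set a := lam ^ d - 1 with ha
    have hε0 : 0 < ‖a‖ := by
      rw [norm_pos_iff]
      intro h0
      obtain ⟨m, hm0, hmpos, hmlt⟩ := hex
      obtain ⟨k, rfl⟩ := hdvd m hm0 hmlt
      have : lam ^ d = 1 := by
        have := sub_eq_zero.mp h0
        exact this
      rw [pow_mul, this, one_pow, sub_self, norm_zero] at hmpos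
      exact lt_irrefl 0 hmpos
    -- value computation
    have hval : ∀ k : ℕ, 0 < k →
        ‖lam ^ (d * k) - 1‖ = ‖a‖ ^ (p ^ (k.factorization p)) := by
      intro k hk
      set j := k.factorization p with hj
      set w := k / p ^ j with hwdef
      have hw : ¬ p ∣ w := Nat.not_dvd_ordCompl hp hk.ne'
      have hkw : p ^ j * w = k := Nat.ordProj_mul_ordCompl_eq_self k p
      have hlamd : lam ^ d = 1 + a := by rw [ha]; ring
      have hfrob : (lam ^ d) ^ (p ^ j) = 1 + a ^ (p ^ j) := by
        rw [hlamd, add_pow_char_pow, one_pow]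
      have hbn : ‖a ^ (p ^ j)‖ = ‖a‖ ^ (p ^ j) := norm_pow _ _
      have hblt : ‖a ^ (p ^ j)‖ < 1 := by
        rw [hbn]
        exact pow_lt_one₀ (norm_nonneg a) hdlt (pow_ne_zero j hp.pos.ne')
      have hbpos : 0 < ‖a ^ (p ^ j)‖ := by
        rw [hbn]; exact pow_pos hε0 _
      have hrw : lam ^ (d * k) = (1 + a ^ (p ^ j)) ^ w := by
        have hdk : d * k = d * (p ^ j * w) := by rw [hkw]
        rw [hdk, pow_mul, pow_mul, hfrob]
      rw [hrw, aux_pow_sub_one_eq p hp _ hblt hbpos w hw, hbn]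
    -- the witness
    refine ⟨a ^ (p + 1), ?_, ?_, ?_⟩
    · rw [norm_pow]; exact pow_pos hε0 _
    · rw [norm_pow]
      exact pow_lt_one₀ (norm_nonneg a) hdlt (by omega)
    · intro n
      rcases Nat.eq_zero_or_pos n with rfl | hn
      · simp
      have hppow : ∀ j : ℕ, ‖a‖ ^ (p ^ j) ≠ ‖a‖ ^ (p + 1) := by
        intro j h
        have hne : p ^ j ≠ p + 1 := by
          intro hpj
          rcases Nat.eq_zero_or_pos j with rfl | hj
          · rw [pow_zero] at hpj; have := hp.two_le; omega
          · have h1 : p ∣ p ^ j := dvd_pow_self p hj.ne'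
            rw [hpj] at h1
            have := (Nat.dvd_add_right (dvd_refl p)).mp h1
            have := Nat.le_of_dvd one_pos this
            have := hp.two_le
            omega
        exact hne ((pow_right_strictAnti₀ hε0 hdlt).injective h)
      by_cases hn1 : ‖lam ^ n - 1‖ < 1
      · obtain ⟨k, rfl⟩ := hdvd n hn hn1
        have hk : 0 < k := Nat.pos_of_ne_zero fun h => by simp [h] at hn
        refine aux_norm_sub_ge _ _ ?_
        rw [hval k hk, norm_pow]
        exact hppow _
      · refine aux_norm_sub_ge _ _ ?_
        rw [norm_pow]
        have h1 : (1:ℝ) ≤ ‖lam ^ n - 1‖ := not_lt.mp hn1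
        have h2 : ‖a‖ ^ (p + 1) < 1 := pow_lt_one₀ (norm_nonneg a) hdlt (by omega)
        linarith
  · -- boring case: every f n is 0 or ≥ 1
    push_neg at hex
    obtain ⟨u, hu0, hu1⟩ := NormedField.exists_norm_lt_one K
    refine ⟨u, hu0, hu1, fun n => ?_⟩
    rcases Nat.eq_zero_or_pos n with rfl | hn
    · simp
    rcases eq_or_ne ‖lam ^ n - 1‖ 0 with h0 | h0
    · have : lam ^ n - 1 = 0 := norm_eq_zero.mp h0
      rw [this, zero_sub, norm_neg]
    · have h1 : 1 ≤ ‖lam ^ n - 1‖ := hex n hn (lt_of_le_of_ne (norm_nonneg _) (Ne.symm h0))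
      exact aux_norm_sub_ge _ _ (by linarith)

end Key

/-- In a locally compact non-Archimedean field of prime characteristic, the multiplication
map `x ↦ λx` with `‖λ‖ = 1` is not topologically transitive on any sphere about the origin. -/
theorem mul_map_not_transitive_char_p (p : ℕ) (hp : p.Prime) (K : Type*)
    [NontriviallyNormedField K] [IsUltrametricDist K] [LocallyCompactSpace K] [CharP K p]
    (lam : K) (hl : ‖lam‖ = 1) (r : ℝ) (hr : 0 < r) :
    ¬ ∃ x : K, ‖x‖ = r ∧
      {y : K | ‖y‖ = r} ⊆ closure {z : K | ∃ n : ℕ, z = lam ^ n * x} := by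
  rintro ⟨x, hx, hsub⟩
  obtain ⟨u, hu0, hu1, hu⟩ := aux_key p hp lam hl
  have h1u : ‖1 + u‖ = 1 := by
    have hne : ‖(1:K)‖ ≠ ‖u‖ := by rw [norm_one]; linarith
    rw [norm_add_eq_max_of_norm_ne_norm hne, norm_one, max_eq_left hu1.le]
  set y := x * (1 + u) with hy
  have hyr : ‖y‖ = r := by rw [hy, norm_mul, h1u, mul_one, hx]
  have hyc : y ∈ closure {z : K | ∃ n : ℕ, z = lam ^ n * x} := hsub hyr
  rw [Metric.mem_closure_iff] at hyc
  obtain ⟨z, hz, hdist⟩ := hyc (r * ‖u‖) (by positivity)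
  obtain ⟨n, rfl⟩ := hz
  have hkey : dist y (lam ^ n * x) = r * ‖lam ^ n - 1 - u‖ := by
    rw [dist_eq_norm]
    have : y - lam ^ n * x = -(x * (lam ^ n - 1 - u)) := by rw [hy]; ring
    rw [this, norm_neg, norm_mul, hx]
  rw [hkey] at hdist
  have : r * ‖u‖ ≤ r * ‖lam ^ n - 1 - u‖ := by
    exact mul_le_mul_of_nonneg_left (hu n) hr.le
  linarith
end

section
/- Let K be a proper finite extension of ℚ_p and λ ∈ K with |λ| = 1. Then the map T_λ : x ↦ λx is not topologically transitive on any sphere about the origin in K. -/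
set_option maxHeartbeats 1000000 in
/-- In a proper finite extension `K` of `ℚ_p` (with the absolute value extending the `p`-adic
one), the map `T_λ : x ↦ λx` with `‖λ‖ = 1` is not topologically transitive on any sphere
about the origin in `K`. -/
theorem mul_map_not_transitive_extension (p : ℕ) [Fact p.Prime] (K : Type*)
    [NormedField K] [IsUltrametricDist K] [Algebra ℚ_[p] K] [FiniteDimensional ℚ_[p] K]
    (hnorm : ∀ q : ℚ_[p], ‖algebraMap ℚ_[p] K q‖ = ‖q‖)
    (hdeg : 1 < Module.finrank ℚ_[p] K)
    (lam : K) (hl : ‖lam‖ = 1) (r : ℝ) (hr : 0 < r) :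
    ¬ ∃ x : K, ‖x‖ = r ∧
      {y : K | ‖y‖ = r} ⊆ closure {z : K | ∃ n : ℕ, z = lam ^ n * x} := by
  rintro ⟨x, hx, hsub⟩
  -- ultrametric facts
  have hmax : ∀ a b : K, ‖a + b‖ ≤ max ‖a‖ ‖b‖ := fun a b =>
    IsUltrametricDist.norm_add_le_max a b
  have iso : ∀ a b : K, ‖b‖ < ‖a‖ → ‖a + b‖ = ‖a‖ := by
    intro a b h
    refine le_antisymm ((hmax a b).trans (by simp [le_of_lt h])) ?_
    by_contra hlt
    push_neg at hlt
    have : ‖a‖ ≤ max ‖a + b‖ ‖b‖ := by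
      simpa using hmax (a + b) (-b)
    rcases max_cases ‖a + b‖ ‖b‖ with ⟨he, _⟩ | ⟨he, _⟩ <;> rw [he] at this <;> linarith
  -- nat casts have norm ≤ 1
  have hnat : ∀ n : ℕ, ‖(n : K)‖ ≤ 1 := by
    intro n
    rw [← map_natCast (algebraMap ℚ_[p] K) n, hnorm]
    exact_mod_cast Padic.norm_int_le_one (n : ℤ)
  have hpK : ‖(p : K)‖ = (p : ℝ)⁻¹ := by
    rw [← map_natCast (algebraMap ℚ_[p] K) p, hnorm, Padic.norm_p]
  have hp1 : (1 : ℝ) < p := by exact_mod_cast (Fact.out : p.Prime).one_lt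
  have hpKlt : ‖(p : K)‖ < 1 := by
    rw [hpK]; exact inv_lt_one_of_one_lt₀ hp1
  -- approximation property
  have P : ∀ u : K, ‖u‖ = 1 → ∀ ε : ℝ, 0 < ε → ∃ n : ℕ, ‖lam ^ n - u‖ < ε := by
    intro u hu ε hε
    have hux : ‖u * x‖ = r := by rw [norm_mul, hu, one_mul, hx]
    have hmem := hsub hux
    rw [Metric.mem_closure_iff] at hmem
    obtain ⟨z, ⟨n, rfl⟩, hz⟩ := hmem (ε * r) (by positivity)
    refine ⟨n, ?_⟩
    rw [dist_eq_norm, ← sub_mul, norm_mul, hx] at hz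
    rw [norm_sub_rev]
    exact lt_of_mul_lt_mul_right hz hr.le
  -- small elements
  have hsmall : ∀ ρ : ℝ, 0 < ρ → ∃ w : K, 0 < ‖w‖ ∧ ‖w‖ ≤ ρ ∧ ‖w‖ < 1 := by
    intro ρ hρ
    obtain ⟨k, hk⟩ := exists_pow_lt_of_lt_one (lt_min hρ one_pos) hpKlt
    refine ⟨(p : K) ^ k, ?_, ?_, ?_⟩
    · rw [norm_pow, hpK]; positivity
    · rw [norm_pow]; exact (hk.trans_le (min_le_left _ _)).le
    · rw [norm_pow]; exact hk.trans_le (min_le_right _ _)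
  -- main lemma: every unit-ball element is within ρ of a natural number
  have L : ∀ ρ : ℝ, 0 < ρ → ρ < 1 → ∀ v : K, ‖v‖ ≤ 1 →
      ∃ q : ℕ, ‖v - (q : K)‖ ≤ ρ := by
    intro ρ hρ0 hρ1 v hv
    obtain ⟨w₀, hw₀0, hw₀ρ, hw₀1⟩ := hsmall ρ hρ0
    have hu₀ : ‖(1 : K) + w₀‖ = 1 := by
      have := iso 1 w₀ (by rwa [norm_one]); rwa [norm_one] at this
    -- existence of m ≥ 1 with ‖lam^m - 1‖ ≤ ρ
    have hex : ∃ n : ℕ, 1 ≤ n ∧ ‖lam ^ n - 1‖ ≤ ρ := by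
      obtain ⟨N, hN⟩ := P (1 + w₀) hu₀ ‖w₀‖ hw₀0
      have hNnorm : ‖lam ^ N - 1‖ = ‖w₀‖ := by
        have : lam ^ N - 1 = (lam ^ N - (1 + w₀)) + w₀ := by ring
        rw [this, add_comm, iso w₀ _ hN]
      refine ⟨N, ?_, hNnorm.le.trans hw₀ρ⟩
      rcases Nat.eq_zero_or_pos N with h0 | h1
      · exfalso
        rw [h0] at hN
        simp only [pow_zero] at hN
        have : ‖(1 : K) - (1 + w₀)‖ = ‖w₀‖ := by
          rw [show (1 : K) - (1 + w₀) = -w₀ by ring, norm_neg]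
        rw [this] at hN; exact lt_irrefl _ hN
      · exact h1
    set m := Nat.find hex with hm
    obtain ⟨hm1, hmρ⟩ := Nat.find_spec hex
    have hmin : ∀ j, j < m → 1 ≤ j → ¬ ‖lam ^ j - 1‖ ≤ ρ := by
      intro j hj h1 hle
      exact Nat.find_min hex hj ⟨h1, hle⟩
    set c : K := lam ^ m - 1 with hc
    have hcρ : ‖c‖ ≤ ρ := hmρ
    have hc1 : ‖c‖ < 1 := hcρ.trans_lt hρ1
    -- c ≠ 0
    have hc0 : c ≠ 0 := by
      intro h0
      have hlm : lam ^ m = 1 := by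
        have := sub_eq_zero.mp h0; exact this
      obtain ⟨N, hN⟩ := P (1 + w₀) hu₀ ‖w₀‖ hw₀0
      have hNj : lam ^ N = lam ^ (N % m) := by
        conv_lhs => rw [← Nat.div_add_mod N m]
        rw [pow_add, pow_mul, hlm, one_pow, one_mul]
      rw [hNj] at hN
      rcases Nat.eq_zero_or_pos (N % m) with h0' | h1'
      · rw [h0'] at hN
        simp only [pow_zero] at hN
        have : ‖(1 : K) - (1 + w₀)‖ = ‖w₀‖ := by
          rw [show (1 : K) - (1 + w₀) = -w₀ by ring, norm_neg]
        rw [this] at hN; exact lt_irrefl _ hN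
      · have hjm : N % m < m := Nat.mod_lt _ (by omega)
        have hgt : ρ < ‖lam ^ (N % m) - 1‖ :=
          lt_of_not_ge (hmin _ hjm h1')
        have : ‖lam ^ (N % m) - (1 + w₀)‖ = ‖lam ^ (N % m) - 1‖ := by
          rw [show lam ^ (N % m) - (1 + w₀) = (lam ^ (N % m) - 1) + (-w₀) by ring]
          exact iso _ _ (by rw [norm_neg]; exact hw₀ρ.trans_lt hgt)
        rw [this] at hN
        exact absurd hN (not_lt.mpr ((hw₀ρ.trans hgt.le)))
    have hcpos : 0 < ‖c‖ := norm_pos_iff.mpr hc0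
    -- binomial expansion
    have hbin : ∀ q : ℕ, ∃ z : K, (1 + c) ^ q = 1 + (q : K) * c + c ^ 2 * z ∧ ‖z‖ ≤ 1 := by
      intro q
      induction q with
      | zero => exact ⟨0, by ring, by simp⟩
      | succ q ih =>
        obtain ⟨z, hz, hz1⟩ := ih
        refine ⟨z + (q : K) + c * z, ?_, ?_⟩
        · rw [pow_succ, hz]; push_cast; ring
        · calc ‖z + (q : K) + c * z‖ ≤ max (max ‖z‖ ‖(q : K)‖) ‖c * z‖ :=
                (hmax _ _).trans (max_le_max (hmax _ _) le_rfl)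
          _ ≤ 1 := by
              refine max_le (max_le hz1 (hnat q)) ?_
              rw [norm_mul]
              exact mul_le_one₀ hc1.le (norm_nonneg _) hz1
    -- approximate 1 + c*v
    have hw : ‖c * v‖ ≤ ‖c‖ := by
      rw [norm_mul]
      calc ‖c‖ * ‖v‖ ≤ ‖c‖ * 1 := by
            exact mul_le_mul_of_nonneg_left hv (norm_nonneg _)
      _ = ‖c‖ := mul_one _
    have hu : ‖(1 : K) + c * v‖ = 1 := by
      rcases eq_or_lt_of_le hw with h | h
      · have := iso 1 (c * v) (by rw [norm_one]; exact hw.trans_lt hc1)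
        rwa [norm_one] at this
      · have := iso 1 (c * v) (by rw [norm_one]; exact hw.trans_lt hc1)
        rwa [norm_one] at this
    obtain ⟨N, hN⟩ := P (1 + c * v) hu (‖c‖ ^ 2) (by positivity)
    set j := N % m with hj
    set q := N / m with hq
    obtain ⟨z, hgz, hz1⟩ := hbin q
    have hlmc : lam ^ m = 1 + c := by rw [hc]; ring
    have hNsplit : lam ^ N = lam ^ j * (1 + c) ^ q := by
      conv_lhs => rw [← Nat.div_add_mod N m]
      rw [pow_add, pow_mul, hlmc, mul_comm]
    set g : K := (1 + c) ^ q with hgdef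
    have hqc : ‖(q : K) * c‖ ≤ ‖c‖ := by
      rw [norm_mul]
      calc ‖(q : K)‖ * ‖c‖ ≤ 1 * ‖c‖ :=
            mul_le_mul_of_nonneg_right (hnat q) (norm_nonneg _)
      _ = ‖c‖ := one_mul _
    have hc2z : ‖c ^ 2 * z‖ ≤ ‖c‖ ^ 2 := by
      rw [norm_mul, norm_pow]
      calc ‖c‖ ^ 2 * ‖z‖ ≤ ‖c‖ ^ 2 * 1 :=
            mul_le_mul_of_nonneg_left hz1 (by positivity)
      _ = ‖c‖ ^ 2 := mul_one _
    have hg1 : ‖g - 1‖ ≤ ‖c‖ := by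
      rw [hgz, show (1 : K) + (q : K) * c + c ^ 2 * z - 1 = (q : K) * c + c ^ 2 * z by ring]
      exact (hmax _ _).trans (max_le hqc (hc2z.trans (by nlinarith)))
    have hgnorm : ‖g‖ = 1 := by
      have h := iso 1 (g - 1) (by rw [norm_one]; exact hg1.trans_lt hc1)
      rw [norm_one, show (1 : K) + (g - 1) = g by ring] at h
      exact h
    -- u - g estimate
    have hug : ‖(1 + c * v) - g‖ ≤ ‖c‖ := by
      rw [hgz, show (1 + c * v) - (1 + (q : K) * c + c ^ 2 * z)
           = c * v + (-((q : K) * c) + -(c ^ 2 * z)) by ring]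
      refine (hmax _ _).trans (max_le hw ((hmax _ _).trans (max_le ?_ ?_)))
      · rw [norm_neg]; exact hqc
      · rw [norm_neg]; exact hc2z.trans (by nlinarith)
    -- ‖lam^j - 1‖ ≤ ‖c‖
    have hc2c : ‖c‖ ^ 2 ≤ ‖c‖ := by nlinarith
    have hNg : ‖lam ^ N - g‖ ≤ ‖c‖ := by
      rw [show lam ^ N - g = (lam ^ N - (1 + c * v)) + ((1 + c * v) - g) by ring]
      exact (hmax _ _).trans (max_le (hN.le.trans hc2c) hug)
    have hjnorm : ‖lam ^ j - 1‖ ≤ ‖c‖ := by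
      have : lam ^ N - g = (lam ^ j - 1) * g := by
        rw [hNsplit]; ring
      rw [this, norm_mul, hgnorm, mul_one] at hNg
      exact hNg
    have hj0 : j = 0 := by
      by_contra hj0
      exact hmin j (Nat.mod_lt _ (by omega)) (by omega) (hjnorm.trans hcρ)
    have hNg' : lam ^ N = g := by
      rw [hNsplit, hj0, pow_zero, one_mul]
    rw [hNg'] at hN
    -- conclude ‖v - q‖ ≤ ‖c‖ ≤ ρ
    have key : ‖c * v - (q : K) * c‖ ≤ ‖c‖ ^ 2 := by
      rw [show c * v - (q : K) * c = ((1 + c * v) - g) + c ^ 2 * z by rw [hgz]; ring]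
      refine (hmax _ _).trans (max_le ?_ hc2z)
      rw [norm_sub_rev]; exact hN.le
    refine ⟨q, ?_⟩
    have : ‖c‖ * ‖v - (q : K)‖ ≤ ‖c‖ * ‖c‖ := by
      rw [← norm_mul]
      calc ‖c * (v - (q : K))‖ = ‖c * v - (q : K) * c‖ := by ring_nf
      _ ≤ ‖c‖ ^ 2 := key
      _ = ‖c‖ * ‖c‖ := sq ‖c‖
    exact (le_of_mul_le_mul_left this hcpos).trans hcρ
  -- Now: every v in the unit ball lies in the closure of ℕ ⊆ range of algebraMap
  letI : NormedSpace ℚ_[p] K :=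
    ⟨fun q y => by rw [Algebra.smul_def, norm_mul, hnorm]⟩
  have hClosed : IsClosed (Set.range (algebraMap ℚ_[p] K)) := by
    have : Set.range (algebraMap ℚ_[p] K)
        = (LinearMap.range (Algebra.linearMap ℚ_[p] K) : Set K) := by
      ext y
      simp only [Set.mem_range, SetLike.mem_coe, LinearMap.mem_range,
        Algebra.linearMap_apply]
    rw [this]
    exact Submodule.closed_of_finiteDimensional _
  have hball : ∀ v : K, ‖v‖ ≤ 1 → v ∈ Set.range (algebraMap ℚ_[p] K) := by
    intro v hv
    have : v ∈ closure (Set.range (algebraMap ℚ_[p] K)) := by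
      rw [Metric.mem_closure_iff]
      intro ε hε
      obtain ⟨q, hqv⟩ := L (min (ε / 2) (1 / 2)) (by positivity)
        (by
          calc min (ε / 2) (1/2) ≤ 1/2 := min_le_right _ _
          _ < 1 := by norm_num) v hv
      refine ⟨(q : K), ⟨(q : ℚ_[p]), by rw [map_natCast]⟩, ?_⟩
      rw [dist_eq_norm]
      calc ‖v - (q : K)‖ ≤ min (ε / 2) (1/2) := hqv
      _ ≤ ε / 2 := min_le_left _ _
      _ < ε := by linarith
    rwa [hClosed.closure_eq] at this
  -- algebraMap is surjective
  have hsurj : Function.Surjective (algebraMap ℚ_[p] K) := by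
    intro y
    obtain ⟨k, hk⟩ : ∃ k : ℕ, ‖(p : K) ^ k * y‖ ≤ 1 := by
      rcases eq_or_ne y 0 with rfl | hy
      · exact ⟨0, by simp⟩
      · have : 0 < ‖y‖ := norm_pos_iff.mpr hy
        obtain ⟨k, hk⟩ := exists_pow_lt_of_lt_one (show (0:ℝ) < 1 / ‖y‖ by positivity) hpKlt
        refine ⟨k, ?_⟩
        rw [norm_mul, norm_pow]
        rw [lt_div_iff₀ this] at hk
        exact hk.le
    obtain ⟨q, hq⟩ := hball _ hk
    refine ⟨q / (p : ℚ_[p]) ^ k, ?_⟩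
    have hpk : algebraMap ℚ_[p] K ((p : ℚ_[p]) ^ k) = (p : K) ^ k := by
      rw [map_pow, map_natCast]
    have hpne : ((p : ℚ_[p]) ^ k) ≠ 0 := by
      apply pow_ne_zero
      exact_mod_cast (Nat.cast_ne_zero (R := ℚ_[p])).mpr (Fact.out : p.Prime).ne_zero
    have hpKne : (p : K) ^ k ≠ 0 := by
      have : 0 < ‖(p : K) ^ k‖ := by rw [norm_pow, hpK]; positivity
      exact norm_pos_iff.mp this
    rw [map_div₀, hpk, hq]
    exact mul_div_cancel_left₀ y hpKne
  -- contradiction with finrank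
  have hle : Module.finrank ℚ_[p] K ≤ 1 := by
    apply finrank_le_one (1 : K)
    intro w
    obtain ⟨q, hq⟩ := hsurj w
    exact ⟨q, by rw [Algebra.smul_def, hq, mul_one]⟩
  omega
end

section
/- For p odd and λ ∈ ℤ_p a unit, the multiplication map x ↦ λx is topologically transitive on the unit sphere {x ∈ ℚ_p : |x| = 1} if and only if λ reduces to a generator of the group of units (ℤ/p²ℤ)*. -/
/-!
Write `Uₖ = (ℤ/pᵏℤ)ˣ`. Since the unit sphere of `ℚ_p` is `ℤ_pˣ` and the balls of radius `p⁻ᵏ`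
are the fibres of reduction modulo `pᵏ`, the orbit of `x` is dense in the sphere exactly when,
for every `k`, the powers of `λ mod pᵏ` times `x mod pᵏ` exhaust `Uₖ`, i.e. when `λ mod pᵏ`
generates `Uₖ` for every `k`. For `k = 2` this is the condition of the theorem. Conversely, if
`λ` generates `U₂` and `p` is odd, then `λ^(p-1) mod pᵏ` has the form `1 + p a` with `p ∤ a`,
so it has order `pᵏ⁻¹`; together with the factor `p - 1` of the order seen modulo `p²`, the
order of `λ mod pᵏ` is `pᵏ⁻¹ (p - 1) = |Uₖ|`.
-/

namespace ZMod

variable {p : ℕ} [Fact p.Prime]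

theorem orderOf_eq_of_cast_eq_one_of_cast_ne_one (hp : p ≠ 2) (m : ℕ) (x : ZMod (p ^ (m + 2)))
    (h1 : (x.cast : ZMod p) = 1) (h2 : (x.cast : ZMod (p ^ 2)) ≠ 1) :
    orderOf x = p ^ (m + 1) := by
  set r : ℤ := x.cast
  have hx : x = r := (intCast_zmod_cast x).symm
  have hr_dvd : ∀ k ≤ m + 2, (x.cast : ZMod (p ^ k)) = 1 ↔ ((p ^ k : ℕ) : ℤ) ∣ r - 1 := by
    intro k hk
    rw [hx, cast_intCast (pow_dvd_pow p hk), eq_comm, ← Int.cast_one,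
      intCast_eq_intCast_iff_dvd_sub]
  obtain ⟨a, ha⟩ := (hr_dvd 1 (by omega)).mp (by rwa [pow_one])
  have hpa : ¬ (p : ℤ) ∣ a := by
    rintro ⟨b, rfl⟩
    exact h2 ((hr_dvd 2 (by omega)).mpr ⟨b, by rw [ha]; push_cast; ring⟩)
  have hx' : x = 1 + p * a := by
    rw [hx, show r = 1 + p * a by push_cast at ha; linarith]
    push_cast; ring
  rw [hx']
  exact orderOf_one_add_mul_prime Fact.out hp a hpa (m + 1)

theorem natCard_units_prime_pow_succ (n : ℕ) :
    Nat.card (ZMod (p ^ (n + 1)))ˣ = p ^ n * (p - 1) := by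
  rw [Nat.card_eq_fintype_card, card_units_eq_totient, Nat.totient_prime_pow_succ Fact.out]

theorem zpowers_eq_top_of_unitsMap (hp : p ≠ 2) (m : ℕ) (g : (ZMod (p ^ (m + 2)))ˣ)
    (hg : Subgroup.zpowers (unitsMap (pow_dvd_pow p (Nat.le_add_left 2 m)) g) = ⊤) :
    Subgroup.zpowers g = ⊤ := by
  have hp1 : 1 < p := (Fact.out : p.Prime).one_lt
  set g₂ := unitsMap (pow_dvd_pow p (Nat.le_add_left 2 m)) g
  have hg₂ : orderOf g₂ = p * (p - 1) := by
    rw [← Nat.card_zpowers, hg, Subgroup.card_top, natCard_units_prime_pow_succ 1, pow_one]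
  have hp_sub_one : p - 1 ∣ orderOf g :=
    (Dvd.intro_left p hg₂.symm).trans (orderOf_map_dvd _ g)
  have hpow : orderOf (g ^ (p - 1)) = p ^ (m + 1) := by
    rw [← orderOf_units]
    apply orderOf_eq_of_cast_eq_one_of_cast_ne_one hp
    · rw [← unitsMap_val (dvd_pow_self p (by omega)), map_pow, units_pow_card_sub_one_eq_one,
        Units.val_one]
    · rw [← unitsMap_val (pow_dvd_pow p (Nat.le_add_left 2 m)), map_pow, Ne, Units.val_eq_one,
        ← orderOf_dvd_iff_pow_eq_one, hg₂]
      exact fun h => (Nat.le_of_dvd (by omega) h).not_gt (lt_mul_of_one_lt_left (by omega) hp1)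
  have hcop : (p ^ (m + 1)).Coprime (p - 1) :=
    Nat.Coprime.pow_left _ ((Nat.coprime_self_sub_right hp1.le).mpr (Nat.coprime_one_right _))
  have hcard := natCard_units_prime_pow_succ (p := p) (m + 1)
  apply Subgroup.eq_top_of_card_eq
  rw [Nat.card_zpowers, hcard]
  refine Nat.dvd_antisymm (hcard ▸ orderOf_dvd_natCard g) ?_
  exact hcop.mul_dvd_of_dvd_of_dvd (hpow ▸ orderOf_pow_dvd _) hp_sub_one

end ZMod

namespace PadicInt

variable {p : ℕ} [Fact p.Prime]

theorem toZModPow_eq_iff_norm_sub_le (k : ℕ) (a b : ℤ_[p]) :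
    toZModPow k a = toZModPow k b ↔ ‖a - b‖ ≤ (p : ℝ) ^ (-(k : ℤ)) := by
  rw [norm_le_pow_iff_mem_span_pow, ← ker_toZModPow, RingHom.mem_ker, map_sub, sub_eq_zero]

theorem coe_mem_closure_orbit_iff (lam x y : ℤ_[p]) :
    (y : ℚ_[p]) ∈ closure {z : ℚ_[p] | ∃ n : ℕ, z = (lam : ℚ_[p]) ^ n * x} ↔
      ∀ k : ℕ, ∃ n : ℕ, toZModPow k (lam ^ n * x) = toZModPow k y := by
  have hdist : ∀ n : ℕ, dist (y : ℚ_[p]) ((lam : ℚ_[p]) ^ n * x) = ‖lam ^ n * x - y‖ := by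
    intro n
    rw [dist_comm, dist_eq_norm, norm_def]
    push_cast; rfl
  have horbit : {z : ℚ_[p] | ∃ n : ℕ, z = (lam : ℚ_[p]) ^ n * x} =
      Set.range fun n : ℕ => (lam : ℚ_[p]) ^ n * x := by
    ext z; simp only [Set.mem_range, eq_comm, Set.mem_ofPred_eq]
  simp only [horbit, Metric.mem_closure_range_iff, hdist, toZModPow_eq_iff_norm_sub_le]
  refine ⟨fun h k => ?_, fun h ε hε => ?_⟩
  · obtain ⟨n, hn⟩ := h _ (zpow_pos (Nat.cast_pos.mpr (Fact.out : p.Prime).pos) (-(k : ℤ)))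
    exact ⟨n, hn.le⟩
  · obtain ⟨k, hk⟩ := exists_pow_neg_lt p hε
    obtain ⟨n, hn⟩ := h k
    exact ⟨n, hn.trans_lt hk⟩

theorem unitsMap_toZModPow_surjective {k : ℕ} (hk : k ≠ 0) :
    Function.Surjective (Units.map (toZModPow k : ℤ_[p] →+* ZMod (p ^ k)).toMonoidHom) := by
  have : Fact (1 < p ^ k) := ⟨Nat.one_lt_pow hk (Fact.out : p.Prime).one_lt⟩
  exact IsLocalRing.surjective_units_map_of_local_ringHom _ (ZMod.ringHom_surjective _)
    (.of_surjective _ (ZMod.ringHom_surjective _))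

theorem unitsMap_unitsMap_toZModPow {m n : ℕ} (h : m ≤ n) (u : ℤ_[p]ˣ) :
    ZMod.unitsMap (pow_dvd_pow p h) (Units.map (toZModPow n).toMonoidHom u) =
      Units.map (toZModPow m).toMonoidHom u :=
  Units.ext (cast_toZModPow m n h (u : ℤ_[p]))

theorem zpowers_unitsMap_toZModPow_eq_top (hp : p ≠ 2) (u : ℤ_[p]ˣ)
    (hu : Subgroup.zpowers (Units.map (toZModPow 2).toMonoidHom u) = ⊤) (k : ℕ) :
    Subgroup.zpowers (Units.map (toZModPow k).toMonoidHom u) = ⊤ := by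
  rcases le_or_gt k 2 with hk | hk
  · have : NeZero (p ^ 2) := ⟨pow_ne_zero 2 (Fact.out : p.Prime).ne_zero⟩
    rw [← unitsMap_unitsMap_toZModPow hk, ← MonoidHom.map_zpowers, hu,
      Subgroup.map_top_of_surjective _ (ZMod.unitsMap_surjective _)]
  · obtain ⟨m, rfl⟩ : ∃ m, k = m + 2 := ⟨k - 2, by omega⟩
    refine ZMod.zpowers_eq_top_of_unitsMap hp m _ ?_
    rwa [unitsMap_unitsMap_toZModPow (Nat.le_add_left 2 m)]

end PadicInt

open PadicInt in
/-- For `p` odd and a unit `λ ∈ ℤ_p`, the map `x ↦ λx` is topologically transitive on the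
unit sphere of `ℚ_p` if and only if the reduction of `λ` generates `(ℤ/p²ℤ)ˣ`. -/
theorem mul_map_transitive_iff_generator (p : ℕ) [Fact p.Prime] (hodd : Odd p)
    (lam : ℤ_[p]) (hl : IsUnit lam) :
    (∃ x : ℚ_[p], ‖x‖ = 1 ∧
        {y : ℚ_[p] | ‖y‖ = 1} ⊆ closure {z : ℚ_[p] | ∃ n : ℕ, z = (lam : ℚ_[p]) ^ n * x}) ↔
      ∀ u : (ZMod (p ^ 2))ˣ,
        u ∈ Subgroup.zpowers (Units.map (PadicInt.toZModPow 2).toMonoidHom hl.unit) := by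
  constructor
  · rintro ⟨x, hx, hdense⟩ u
    obtain ⟨x, rfl⟩ : ∃ v : ℤ_[p]ˣ, ((v : ℤ_[p]) : ℚ_[p]) = x := ⟨mkUnits hx, mkUnits_eq hx⟩
    set reduce := Units.map (toZModPow 2 : ℤ_[p] →+* ZMod (p ^ 2)).toMonoidHom
    obtain ⟨y, hy⟩ := unitsMap_toZModPow_surjective two_ne_zero (u * reduce x)
    obtain ⟨n, hn⟩ := (coe_mem_closure_orbit_iff lam x y).mp (hdense (norm_units y)) 2
    have hcancel : u * reduce x = reduce hl.unit ^ n * reduce x := by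
      rw [← hy, ← map_pow, ← map_mul]
      ext
      simpa [reduce] using hn.symm
    exact mul_right_cancel hcancel ▸ Subgroup.npow_mem_zpowers _ n
  · intro hgen
    refine ⟨1, norm_one, fun y hy => ?_⟩
    obtain ⟨y, rfl⟩ : ∃ v : ℤ_[p]ˣ, ((v : ℤ_[p]) : ℚ_[p]) = y := ⟨mkUnits hy, mkUnits_eq hy⟩
    rw [← coe_one, coe_mem_closure_orbit_iff]
    intro k
    have hgen_k := zpowers_unitsMap_toZModPow_eq_top (hodd.ne_two_of_dvd_nat dvd_rfl) _
      ((Subgroup.eq_top_iff' _).mpr hgen) k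
    obtain ⟨n, hn⟩ := mem_powers_iff_mem_zpowers.mpr
      (hgen_k ▸ Subgroup.mem_top (Units.map (toZModPow k).toMonoidHom y))
    exact ⟨n, by simpa using congrArg Units.val hn⟩
end

section
/- Let f(x) = λx + Σ_{i≥2} a_i x^i be a power series over a complete non-Archimedean field with |λ| = 1 and a = sup_{i≥2} |a_i|^{1/(i-1)} < ∞. Then f converges on the open disc D of radius 1/a about 0, and f : D → D is injective with |f(x) - f(y)| = |x - y| for all x, y ∈ D. -/
open Metric Filter

private lemma ultra_sum_le {K : Type*} [SeminormedAddCommGroup K] [IsUltrametricDist K]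
    {ι : Type*} (s : Finset ι) (f : ι → K) {C : ℝ} (hC : 0 ≤ C)
    (h : ∀ i ∈ s, ‖f i‖ ≤ C) : ‖∑ i ∈ s, f i‖ ≤ C := by
  classical
  induction s using Finset.cons_induction with
  | empty => simpa using hC
  | cons i s hi ih =>
    rw [Finset.sum_cons]
    exact (IsUltrametricDist.norm_add_le_max _ _).trans
      (max_le (h i (by simp)) (ih fun j hj => h j (by simp [hj])))

private lemma ultra_summable {K : Type*} [NormedAddCommGroup K] [IsUltrametricDist K]
    [CompleteSpace K] {f : ℕ → K} (h : Tendsto f atTop (nhds 0)) : Summable f := by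
  rw [summable_iff_vanishing]
  intro e he
  obtain ⟨ε, hε, hball⟩ := Metric.mem_nhds_iff.mp he
  obtain ⟨N, hN⟩ := Metric.tendsto_atTop.mp h (ε / 2) (by positivity)
  refine ⟨Finset.range N, fun t ht => hball ?_⟩
  simp only [mem_ball, dist_zero_right]
  refine lt_of_le_of_lt (ultra_sum_le (C := ε / 2) t f (by positivity) fun i hi => ?_)
    (by linarith)
  have hNi : N ≤ i := by
    by_contra hc
    exact (Finset.disjoint_left.mp ht hi) (Finset.mem_range.mpr (not_le.mp hc))
  simpa [dist_zero_right] using (hN i hNi).le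

private lemma ultra_hasSum_norm_le {K : Type*} [SeminormedAddCommGroup K] [IsUltrametricDist K]
    {ι : Type*} {f : ι → K} {s : K} {C : ℝ} (hC : 0 ≤ C) (hs : HasSum f s)
    (h : ∀ i, ‖f i‖ ≤ C) : ‖s‖ ≤ C :=
  le_of_tendsto ((continuous_norm.tendsto s).comp hs)
    (Eventually.of_forall fun t => ultra_sum_le t f hC fun i _ => h i)

/-- Let `f(x) = λx + Σ_{i≥2} a_i x^i` over a complete non-Archimedean field with `|λ| = 1`
and `a = sup_{i≥2} |a_i|^(1/(i-1))`, `0 < a < ∞`. Then `f` converges on the open disc `D` of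
radius `1/a` about `0`, maps `D` into `D`, and is injective and isometric on `D`. -/
theorem converges_injective_isometric_on_disc (K : Type*)
    [NormedField K] [IsUltrametricDist K] [CompleteSpace K]
    (lam : K) (hlam : ‖lam‖ = 1) (c : ℕ → K) (hc0 : c 0 = 0) (hc1 : c 1 = lam)
    (a : ℝ) (hpos : 0 < a)
    (ha : IsLUB {r : ℝ | ∃ i : ℕ, 2 ≤ i ∧ r = ‖c i‖ ^ ((1 : ℝ) / ((i : ℝ) - 1))} a) :
    ∃ f : K → K,
      (∀ x ∈ Metric.ball (0 : K) (1 / a), HasSum (fun i : ℕ => c i * x ^ i) (f x)) ∧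
      Set.MapsTo f (Metric.ball (0 : K) (1 / a)) (Metric.ball (0 : K) (1 / a)) ∧
      Set.InjOn f (Metric.ball (0 : K) (1 / a)) ∧
      ∀ x ∈ Metric.ball (0 : K) (1 / a), ∀ y ∈ Metric.ball (0 : K) (1 / a),
        ‖f x - f y‖ = ‖x - y‖ := by
  have ha0 : (0 : ℝ) < 1 / a := by positivity
  -- coefficient bound
  have hcb : ∀ i : ℕ, 2 ≤ i → ‖c i‖ ≤ a ^ (i - 1) := by
    intro i hi
    have he : (0 : ℝ) < (i : ℝ) - 1 := by
      have : (2 : ℝ) ≤ (i : ℝ) := by exact_mod_cast hi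
      linarith
    have h1 : ‖c i‖ ^ ((1 : ℝ) / ((i : ℝ) - 1)) ≤ a := ha.1 ⟨i, hi, rfl⟩
    have h2 : (‖c i‖ ^ ((1 : ℝ) / ((i : ℝ) - 1))) ^ ((i : ℝ) - 1) ≤ a ^ ((i : ℝ) - 1) :=
      Real.rpow_le_rpow (Real.rpow_nonneg (norm_nonneg _) _) h1 he.le
    calc ‖c i‖ = (‖c i‖ ^ ((1 : ℝ) / ((i : ℝ) - 1))) ^ ((i : ℝ) - 1) := by
          rw [← Real.rpow_mul (norm_nonneg _), one_div_mul_cancel he.ne', Real.rpow_one]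
      _ ≤ a ^ ((i : ℝ) - 1) := h2
      _ = a ^ (i - 1) := by
          rw [← Real.rpow_natCast a (i - 1)]
          congr 1
          rw [Nat.cast_sub (by omega), Nat.cast_one]
  -- key difference bound
  have key : ∀ x ∈ ball (0 : K) (1 / a), ∀ y ∈ ball (0 : K) (1 / a), ∀ i : ℕ, 2 ≤ i →
      ‖c i * x ^ i - c i * y ^ i‖ ≤ (a * max ‖x‖ ‖y‖) * ‖x - y‖ := by
    intro x hx y hy i hi
    set m := max ‖x‖ ‖y‖ with hm
    have hm0 : 0 ≤ m := le_max_of_le_left (norm_nonneg _)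
    have hma : m < 1 / a := max_lt (mem_ball_zero_iff.mp hx) (mem_ball_zero_iff.mp hy)
    have ht1 : a * m < 1 := by
      calc a * m < a * (1 / a) := by exact mul_lt_mul_of_pos_left hma hpos
        _ = 1 := by field_simp
    have ht0 : 0 ≤ a * m := mul_nonneg hpos.le hm0
    have hgeo : ‖∑ j ∈ Finset.range i, x ^ j * y ^ (i - 1 - j)‖ ≤ m ^ (i - 1) := by
      apply ultra_sum_le _ _ (pow_nonneg hm0 _)
      intro j hj
      rw [Finset.mem_range] at hj
      calc ‖x ^ j * y ^ (i - 1 - j)‖ ≤ m ^ j * m ^ (i - 1 - j) := by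
            rw [norm_mul, norm_pow, norm_pow]
            exact mul_le_mul (pow_le_pow_left₀ (norm_nonneg _) (le_max_left _ _) _)
              (pow_le_pow_left₀ (norm_nonneg _) (le_max_right _ _) _)
              (by positivity) (pow_nonneg hm0 _)
        _ = m ^ (i - 1) := by rw [← pow_add]; congr 1; omega
    calc ‖c i * x ^ i - c i * y ^ i‖
        = ‖c i‖ * ‖∑ j ∈ Finset.range i, x ^ j * y ^ (i - 1 - j)‖ * ‖x - y‖ := by
          rw [← mul_sub, ← geom_sum₂_mul, norm_mul, norm_mul, mul_assoc]
      _ ≤ a ^ (i - 1) * m ^ (i - 1) * ‖x - y‖ := by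
          gcongr
          exact hcb i hi
      _ = (a * m) ^ (i - 1) * ‖x - y‖ := by rw [mul_pow]
      _ ≤ (a * m) * ‖x - y‖ := by
          gcongr
          exact pow_le_of_le_one ht0 ht1.le (by omega)
  -- summability
  have hsum : ∀ x ∈ ball (0 : K) (1 / a), Summable (fun i : ℕ => c i * x ^ i) := by
    intro x hx
    have hx' : ‖x‖ < 1 / a := by simpa [dist_zero_right] using hx
    have ht1 : a * ‖x‖ < 1 := by
      calc a * ‖x‖ < a * (1 / a) := by exact mul_lt_mul_of_pos_left hx' hpos
        _ = 1 := by field_simp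
    have ht0 : 0 ≤ a * ‖x‖ := mul_nonneg hpos.le (norm_nonneg _)
    apply ultra_summable
    refine squeeze_zero_norm' (a := fun i : ℕ => (a * ‖x‖) ^ (i - 1) * ‖x‖) ?_ ?_
    · filter_upwards [eventually_ge_atTop 2] with i hi
      calc ‖c i * x ^ i‖ = ‖c i‖ * ‖x‖ ^ i := by rw [norm_mul, norm_pow]
        _ ≤ a ^ (i - 1) * ‖x‖ ^ i := by gcongr; exact hcb i hi
        _ = (a * ‖x‖) ^ (i - 1) * ‖x‖ := by
            rw [mul_pow, mul_assoc, ← pow_succ]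
            congr 2
            omega
    · have := ((tendsto_pow_atTop_nhds_zero_of_lt_one ht0 ht1).comp
        (tendsto_sub_atTop_nat 1)).mul_const ‖x‖
      simpa using this
  set f : K → K := fun x => ∑' i : ℕ, c i * x ^ i with hfdef
  have hf : ∀ x ∈ ball (0 : K) (1 / a), HasSum (fun i : ℕ => c i * x ^ i) (f x) :=
    fun x hx => (hsum x hx).hasSum
  have h0mem : (0 : K) ∈ ball (0 : K) (1 / a) := mem_ball_self ha0
  have hf0 : f 0 = 0 := by
    have hz : HasSum (fun i : ℕ => c i * (0 : K) ^ i) 0 := by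
      convert hasSum_zero with i
      rcases Nat.eq_zero_or_pos i with h | h
      · simp [h, hc0]
      · simp [zero_pow h.ne']
    simpa [hfdef] using hz.tsum_eq
  have hiso : ∀ x ∈ ball (0 : K) (1 / a), ∀ y ∈ ball (0 : K) (1 / a),
      ‖f x - f y‖ = ‖x - y‖ := by
    intro x hx y hy
    rcases eq_or_ne x y with rfl | hxy
    · simp
    have hg : HasSum (fun i : ℕ => c i * x ^ i - c i * y ^ i) (f x - f y) :=
      (hf x hx).sub (hf y hy)
    have hS : ∑ i ∈ Finset.range 2, (c i * x ^ i - c i * y ^ i) = lam * (x - y) := by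
      simp [Finset.sum_range_succ, hc0, hc1]
      ring
    have hT : HasSum (fun n : ℕ => c (n + 2) * x ^ (n + 2) - c (n + 2) * y ^ (n + 2))
        (f x - f y - lam * (x - y)) := by
      have := (hasSum_nat_add_iff' (f := fun i : ℕ => c i * x ^ i - c i * y ^ i) 2).mpr hg
      rwa [hS] at this
    set m := max ‖x‖ ‖y‖ with hm
    have hm0 : 0 ≤ m := le_max_of_le_left (norm_nonneg _)
    have hma : m < 1 / a := max_lt (mem_ball_zero_iff.mp hx) (mem_ball_zero_iff.mp hy)
    have ht1 : a * m < 1 := by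
      calc a * m < a * (1 / a) := by exact mul_lt_mul_of_pos_left hma hpos
        _ = 1 := by field_simp
    have hxy0 : 0 < ‖x - y‖ := by
      rw [norm_pos_iff, sub_ne_zero]; exact hxy
    have hTle : ‖f x - f y - lam * (x - y)‖ ≤ (a * m) * ‖x - y‖ :=
      ultra_hasSum_norm_le (mul_nonneg (mul_nonneg hpos.le hm0) (norm_nonneg _)) hT
        (fun n => key x hx y hy (n + 2) (by omega))
    have hlt : ‖f x - f y - lam * (x - y)‖ < ‖x - y‖ :=
      hTle.trans_lt (mul_lt_of_lt_one_left hxy0 ht1)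
    have hlam' : ‖lam * (x - y)‖ = ‖x - y‖ := by rw [norm_mul, hlam, one_mul]
    have hne : ‖f x - f y - lam * (x - y)‖ ≠ ‖lam * (x - y)‖ := by rw [hlam']; exact hlt.ne
    calc ‖f x - f y‖ = ‖(f x - f y - lam * (x - y)) + lam * (x - y)‖ := by rw [sub_add_cancel]
      _ = max ‖f x - f y - lam * (x - y)‖ ‖lam * (x - y)‖ :=
          IsUltrametricDist.norm_add_eq_max_of_norm_ne_norm hne
      _ = ‖x - y‖ := by rw [hlam', max_eq_right hlt.le]
  refine ⟨f, hf, ?_, ?_, hiso⟩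
  · intro x hx
    have := hiso x hx 0 h0mem
    rw [hf0, sub_zero, sub_zero] at this
    simpa [mem_ball, dist_zero_right, this] using hx
  · intro x hx y hy hxy
    have := hiso x hx y hy
    rw [hxy, sub_self, norm_zero] at this
    exact sub_eq_zero.mp (norm_eq_zero.mp this.symm)
end

section
/- Let f(x) = λx + Σ_{i≥2} a_i x^i ∈ ℂ_p[[x]] with λ not a root of unity and |λ| = 1, a = sup_{i≥2}|a_i|^{1/(i-1)}, and let g(x) = x + Σ_{k≥2} b_k x^k be the formal solution of g∘f = λg with g(0)=0, g'(0)=1. Then for all k ≥ 2, |b_k| ≤ a^{k-1} / Π_{n=1}^{k-1} |1 - λ^n|. -/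
/-!
Write `f = X φ` with `φ(0) = λ`. Comparing the coefficients of `x^k` in `g ∘ f = λ g` gives
`(λ - λ^k) b_k = Σ_{1 ≤ l < k} b_l [x^k] f^l`, and `|λ - λ^k| = |1 - λ^{k-1}|`. Since
`|[x^j] φ| ≤ a^j`, the ultrametric inequality gives `|[x^k] f^l| ≤ a^{k-l}`, and bounding the sum
by its largest term turns the recursion into the claimed estimate by strong induction on `k`;
the factors `|1 - λ^n|` are at most `1`, so the products over `[1, n]` decrease in `n`.
-/

open PowerSeries Finset

section PowerSeries

variable {R : Type*}

theorem coeff_X_mul_pow [CommSemiring R] (φ : R⟦X⟧) (l j : ℕ) :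
    coeff j ((X * φ) ^ l) = if l ≤ j then coeff (j - l) (φ ^ l) else 0 := by
  rw [mul_pow, coeff_X_pow_mul']

theorem coeff_X_mul_pow_self [CommSemiring R] (φ : R⟦X⟧) (l : ℕ) :
    coeff l ((X * φ) ^ l) = constantCoeff φ ^ l := by
  simp [coeff_X_mul_pow]

theorem sub_pow_mul_eq_sum_Ico_of_schroder [CommRing R] {φ : R⟦X⟧} {b : ℕ → R} {k : ℕ}
    (hk : k ≠ 0)
    (h : ∑ l ∈ range (k + 1), b l * coeff k ((X * φ) ^ l) = constantCoeff φ * b k) :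
    (constantCoeff φ - constantCoeff φ ^ k) * b k =
      ∑ l ∈ Ico 1 k, b l * coeff k ((X * φ) ^ l) := by
  rw [sum_range_succ, range_eq_Ico, sum_eq_sum_Ico_succ_bot (Nat.pos_of_ne_zero hk),
    coeff_X_mul_pow_self, pow_zero, coeff_one, if_neg hk, mul_zero, zero_add] at h
  linear_combination -h

variable [NormedCommRing R] {a : ℝ} {φ : R⟦X⟧}

theorem nonneg_of_forall_norm_coeff_le_pow (hφ : ∀ i, ‖coeff i φ‖ ≤ a ^ i) : 0 ≤ a := by
  simpa using (norm_nonneg _).trans (hφ 1)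

variable [IsUltrametricDist R]

theorem norm_coeff_mul_le_pow {ψ : R⟦X⟧} (hφ : ∀ i, ‖coeff i φ‖ ≤ a ^ i)
    (hψ : ∀ i, ‖coeff i ψ‖ ≤ a ^ i) (j : ℕ) : ‖coeff j (φ * ψ)‖ ≤ a ^ j := by
  have ha := nonneg_of_forall_norm_coeff_le_pow hφ
  rw [coeff_mul]
  refine IsUltrametricDist.norm_sum_le_of_forall_le_of_nonneg (by positivity) fun x hx => ?_
  rw [← mem_antidiagonal.mp hx, pow_add]
  exact (norm_mul_le _ _).trans (mul_le_mul (hφ _) (hψ _) (norm_nonneg _) (by positivity))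

theorem norm_coeff_pow_le_pow [NormOneClass R] (hφ : ∀ i, ‖coeff i φ‖ ≤ a ^ i) (l j : ℕ) :
    ‖coeff j (φ ^ l)‖ ≤ a ^ j := by
  induction l generalizing j with
  | zero =>
    rw [pow_zero, coeff_one]
    split_ifs with hj
    · simp [hj]
    · simpa using pow_nonneg (nonneg_of_forall_norm_coeff_le_pow hφ) j
  | succ l ih => exact pow_succ φ l ▸ norm_coeff_mul_le_pow ih hφ j

theorem norm_coeff_X_mul_pow_le [NormOneClass R] (hφ : ∀ i, ‖coeff i φ‖ ≤ a ^ i) (l j : ℕ) :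
    ‖coeff j ((X * φ) ^ l)‖ ≤ a ^ (j - l) := by
  rw [coeff_X_mul_pow]
  split_ifs
  · exact norm_coeff_pow_le_pow hφ l _
  · simpa using pow_nonneg (nonneg_of_forall_norm_coeff_le_pow hφ) _

end PowerSeries

section Ultrametric

variable {K : Type*} [NormedField K] [IsUltrametricDist K] {lam : K}

theorem norm_one_sub_pow_le_one (hlam : ‖lam‖ ≤ 1) (n : ℕ) : ‖1 - lam ^ n‖ ≤ 1 := by
  rw [sub_eq_add_neg]
  refine (IsUltrametricDist.norm_add_le_max _ _).trans (max_le norm_one.le ?_)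
  simpa [norm_pow] using pow_le_one₀ (norm_nonneg _) hlam

theorem antitone_prod_norm_one_sub_pow (hlam : ‖lam‖ ≤ 1) :
    Antitone fun m => ∏ n ∈ Icc 1 m, ‖1 - lam ^ n‖ :=
  antitone_nat_of_succ_le fun m => by
    rw [prod_Icc_succ_top (by omega)]
    exact mul_le_of_le_one_right (prod_nonneg fun _ _ => norm_nonneg _)
      (norm_one_sub_pow_le_one hlam _)

theorem norm_mul_prod_le_pow_of_recursion (hlam : ‖lam‖ = 1) {a : ℝ} {b : ℕ → K}
    {e : ℕ → ℕ → K} (hb1 : ‖b 1‖ ≤ 1) (he : ∀ k l, ‖e k l‖ ≤ a ^ (k - l))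
    (hrec : ∀ k, 2 ≤ k → (lam - lam ^ k) * b k = ∑ l ∈ Ico 1 k, b l * e k l)
    (k : ℕ) (hk : 1 ≤ k) :
    ‖b k‖ * ∏ n ∈ Icc 1 (k - 1), ‖1 - lam ^ n‖ ≤ a ^ (k - 1) := by
  have ha : 0 ≤ a := by simpa using (norm_nonneg _).trans (he 1 0)
  induction k using Nat.strong_induction_on with
  | _ k ih =>
  rcases k with _ | _ | m
  · omega
  · simpa using hb1
  show ‖b (m + 2)‖ * ∏ n ∈ Icc 1 (m + 1), ‖1 - lam ^ n‖ ≤ a ^ (m + 1)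
  have hfac : ‖lam - lam ^ (m + 2)‖ = ‖1 - lam ^ (m + 1)‖ := by
    rw [show lam - lam ^ (m + 2) = lam * (1 - lam ^ (m + 1)) by ring, norm_mul, hlam, one_mul]
  obtain ⟨l, hl, hsum⟩ := IsUltrametricDist.exists_norm_finsetSum_le_of_nonempty
    (nonempty_Ico.2 (by omega : 1 < m + 2)) fun l => b l * e (m + 2) l
  obtain ⟨hl1, hl2⟩ := mem_Ico.1 hl
  calc ‖b (m + 2)‖ * ∏ n ∈ Icc 1 (m + 1), ‖1 - lam ^ n‖
      = ‖(lam - lam ^ (m + 2)) * b (m + 2)‖ * ∏ n ∈ Icc 1 m, ‖1 - lam ^ n‖ := by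
        rw [prod_Icc_succ_top (by omega), norm_mul, hfac]; ring
    _ ≤ ‖b l * e (m + 2) l‖ * ∏ n ∈ Icc 1 m, ‖1 - lam ^ n‖ := by
        rw [hrec _ (by omega)]
        gcongr
    _ ≤ (‖b l‖ * ∏ n ∈ Icc 1 (l - 1), ‖1 - lam ^ n‖) * a ^ (m + 2 - l) := by
        rw [norm_mul, mul_right_comm]
        exact mul_le_mul (mul_le_mul_of_nonneg_left
          (antitone_prod_norm_one_sub_pow hlam.le (by omega)) (norm_nonneg _)) (he _ _)
          (norm_nonneg _) (by positivity)
    _ ≤ a ^ (l - 1) * a ^ (m + 2 - l) := by gcongr; exact ih l hl2 hl1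
    _ = a ^ (m + 1) := by rw [← pow_add]; congr 1; omega

end Ultrametric

theorem norm_le_pow_of_mem_upperBounds {E : Type*} [SeminormedAddGroup E] {c : ℕ → E} {a : ℝ}
    (ha : a ∈ upperBounds {r : ℝ | ∃ i : ℕ, 2 ≤ i ∧ r = ‖c i‖ ^ ((1 : ℝ) / ((i : ℝ) - 1))})
    {n : ℕ} (hn : 1 ≤ n) : ‖c (n + 1)‖ ≤ a ^ n := by
  have h := ha ⟨n + 1, by omega, rfl⟩
  rw [Nat.cast_add_one, add_sub_cancel_right, one_div] at h
  rw [← Real.rpow_natCast]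
  exact (Real.rpow_inv_le_iff_of_pos (norm_nonneg _)
    ((Real.rpow_nonneg (norm_nonneg _) _).trans h) (Nat.cast_pos.2 hn)).1 h

theorem schroder_coeff_bound_general (K : Type*)
    [NormedField K] [IsUltrametricDist K]
    (lam : K) (hlam : ‖lam‖ = 1) (hroot : ∀ k : ℕ, 0 < k → lam ^ k ≠ 1)
    (c : ℕ → K) (hc0 : c 0 = 0) (hc1 : c 1 = lam)
    (a : ℝ)
    (ha : IsLUB {r : ℝ | ∃ i : ℕ, 2 ≤ i ∧ r = ‖c i‖ ^ ((1 : ℝ) / ((i : ℝ) - 1))} a)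
    (b : ℕ → K) (hb1 : b 1 = 1)
    (hschroder : ∀ k : ℕ,
      (∑ l ∈ Finset.range (k + 1),
          b l * PowerSeries.coeff (R := K) k ((PowerSeries.mk c) ^ l)) = lam * b k) :
    ∀ k : ℕ, 2 ≤ k →
      ‖b k‖ ≤ a ^ (k - 1) / ∏ n ∈ Finset.Icc 1 (k - 1), ‖1 - lam ^ n‖ := by
  intro k hk
  set φ : K⟦X⟧ := mk fun i => c (i + 1)
  have hf : mk c = X * φ := by
    ext (_ | i) <;> simp [φ, coeff_succ_X_mul, hc0]
  have hφ0 : constantCoeff φ = lam := by simp [φ, ← coeff_zero_eq_constantCoeff_apply, hc1]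
  have hφ : ∀ i, ‖coeff i φ‖ ≤ a ^ i := by
    rintro (_ | i)
    · simp [φ, hc1, hlam]
    · simpa [φ] using norm_le_pow_of_mem_upperBounds ha.1 (n := i + 1) (by omega)
  have hrec : ∀ k, 2 ≤ k → (lam - lam ^ k) * b k = ∑ l ∈ Ico 1 k, b l * coeff k (mk c ^ l) := by
    intro k hk
    rw [← hφ0, hf]
    exact sub_pow_mul_eq_sum_Ico_of_schroder (by omega) (by rw [hφ0, ← hf]; exact hschroder k)
  have hbound := norm_mul_prod_le_pow_of_recursion hlam (by simp [hb1])
    (fun k l => hf ▸ norm_coeff_X_mul_pow_le hφ l k) hrec k (by omega)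
  rwa [le_div_iff₀ (prod_pos fun n hn => norm_pos_iff.2 (sub_ne_zero.2
    (hroot n (mem_Icc.1 hn).1).symm))]

/-- Coefficient bound for the formal Schröder conjugacy. Let `f(x) = λx + Σ_{i≥2} a_i x^i`
over `ℂ_p` (modelled as a complete algebraically closed non-Archimedean field of
characteristic zero with `‖p‖ = 1/p`), with `|λ| = 1` and `λ` not a root of unity, and
`a = sup_{i≥2} |a_i|^(1/(i-1))`. Let `g(x) = x + Σ_{k≥2} b_k x^k` be the formal solution of
the Schröder equation `g ∘ f = λ g` (expressed coefficientwise: the `k`-th coefficient of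
`Σ_l b_l f(x)^l` equals `λ b_k`). Then `|b_k| ≤ a^(k-1) / Π_{n=1}^{k-1} |1 - λ^n|`. -/
theorem schroder_coeff_bound (p : ℕ) (hp : p.Prime) (K : Type*)
    [NormedField K] [IsUltrametricDist K] [CompleteSpace K] [IsAlgClosed K] [CharZero K]
    (hK : ‖(p : K)‖ = 1 / p)
    (lam : K) (hlam : ‖lam‖ = 1) (hroot : ∀ k : ℕ, 0 < k → lam ^ k ≠ 1)
    (c : ℕ → K) (hc0 : c 0 = 0) (hc1 : c 1 = lam)
    (a : ℝ)
    (ha : IsLUB {r : ℝ | ∃ i : ℕ, 2 ≤ i ∧ r = ‖c i‖ ^ ((1 : ℝ) / ((i : ℝ) - 1))} a)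
    (b : ℕ → K) (hb0 : b 0 = 0) (hb1 : b 1 = 1)
    (hschroder : ∀ k : ℕ,
      (∑ l ∈ Finset.range (k + 1),
          b l * PowerSeries.coeff (R := K) k ((PowerSeries.mk c) ^ l)) = lam * b k) :
    ∀ k : ℕ, 2 ≤ k →
      ‖b k‖ ≤ a ^ (k - 1) / ∏ n ∈ Finset.Icc 1 (k - 1), ‖1 - lam ^ n‖ :=
  schroder_coeff_bound_general K lam hlam hroot c hc0 hc1 a ha b hb1 hschroder
end
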